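/- arXiv:1902.08259 — 2 statements merged into one kernel-verified Lean document; each statement's English description precedes it below -/
import Mathlib

section
/- For every integer k ≥ 2 with k ≡ 2 (mod 3), there exists a constant c > 0 (depending only on k) such that for every sufficiently large n there exist a set P of n points in ℝ² and positive distances δ₁, …, δ_k for which P spans at least c · n^{(k+1)/3 + 1} k-chains. That is, C_k(n) = Ω(n^{(k+1)/3+1}). -/
/-- The number of `k`-chains spanned by a finite point set `P` in `ℝ^d` with respect to a
sequence of distances `δ : Fin k → ℝ`: tuples `(p 0, …, p k)` of pairwise distinct points of
`P` with `dist (p j) (p (j+1)) = δ j` for all `j`. -/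
noncomputable def chainCount (d k : ℕ) (P : Finset (EuclideanSpace ℝ (Fin d)))
    (δ : Fin k → ℝ) : ℕ :=
  Set.ncard {p : Fin (k + 1) → EuclideanSpace ℝ (Fin d) |
    (∀ i, p i ∈ P) ∧ Function.Injective p ∧
    ∀ j : Fin k, dist (p j.castSucc) (p j.succ) = δ j}

/-- `maxChains d k n` is the maximum number of `k`-chains spanned by a set of `n` points in
`ℝ^d`, over all sequences of positive distances. -/
noncomputable def maxChains (d k n : ℕ) : ℕ :=
  sSup {m | ∃ (P : Finset (EuclideanSpace ℝ (Fin d))) (δ : Fin k → ℝ),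
    P.card = n ∧ (∀ j, 0 < δ j) ∧ m = chainCount d k P δ}


/-!
Put hubs `hᵢ = (3i, 0)`, `i ≤ M`, and around each hub the points `hᵢ + u` for a family of unit
vectors `u`. The walk `hᵢ + u₀, hᵢ, hᵢ + u₁, hᵢ₊₁ + u₁, hᵢ₊₁, hᵢ₊₁ + u₂, …` has the distance
pattern `1, 1, 3, 1, 1, 3, …` whatever the directions are, and it has no repeated point as soon as
the `M + 2` directions are distinct. Labelling the `a`-th direction by a pair `(a, τ a)` with
`τ a < q` makes them distinct, so `(M + 1)((M + 2) q + 1) ≍ q` points carry `q^(M+2)` chains of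
length `k = 3M + 2`, where `M + 2 = (k + 1)/3 + 1`; adding arbitrary points up to `n ≍ q` only
adds chains.
-/

open Function

section HubsAndSpokes

variable {E : Type*} [NormedAddCommGroup E] [NormedSpace ℝ E] {ι : Type*} (v : E) (u : ι → E)

noncomputable def hub (i : ℕ) : E := (3 * i : ℝ) • v

noncomputable def spoke (i : ℕ) (s : ι) : E := hub v i + u s

def slot {M : ℕ} (j : Fin (3 * M + 2 + 1)) : Fin (M + 2) := ⟨(j + 1) / 3, by omega⟩

/-- Position `j` is the hub `j / 3` when `j ≡ 1 (mod 3)`, and otherwise a spoke of that hub in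
direction `σ ((j + 1) / 3)`; positions `3i + 2` and `3i + 3` share a direction. -/
noncomputable def hubChain {M : ℕ} (σ : Fin (M + 2) → ι) (j : Fin (3 * M + 2 + 1)) : E :=
  if (j : ℕ) % 3 = 1 then hub v (j / 3) else spoke v u (j / 3) (σ (slot j))

def hubChainDist (k : ℕ) (j : Fin k) : ℝ := if (j : ℕ) % 3 = 2 then 3 else 1

lemma hubChainDist_pos (k : ℕ) (j : Fin k) : 0 < hubChainDist k j := by
  unfold hubChainDist
  split_ifs <;> norm_num

variable {v u}

lemma dist_hub_hub (hv : ‖v‖ = 1) (i j : ℕ) :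
    dist (hub v i) (hub v j) = 3 * |(i : ℝ) - j| := by
  rw [dist_eq_norm, hub, hub, ← sub_smul, norm_smul, hv, mul_one, Real.norm_eq_abs, ← mul_sub,
    abs_mul, abs_of_pos three_pos]

lemma eq_of_dist_hub_lt (hv : ‖v‖ = 1) {i j : ℕ} (h : dist (hub v i) (hub v j) < 3) : i = j := by
  rw [dist_hub_hub hv] at h
  obtain ⟨h₁, h₂⟩ := abs_sub_lt_iff.mp (by linarith : |(i : ℝ) - j| < 1)
  have : i < j + 1 := by exact_mod_cast (by linarith : (i : ℝ) < j + 1)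
  have : j < i + 1 := by exact_mod_cast (by linarith : (j : ℝ) < i + 1)
  omega

lemma hub_injective (hv : ‖v‖ = 1) : Injective (hub v) :=
  fun _ _ h => eq_of_dist_hub_lt hv (by rw [h, dist_self]; norm_num)

lemma dist_spoke_hub (hu : ∀ s, ‖u s‖ = 1) (i : ℕ) (s : ι) :
    dist (spoke v u i s) (hub v i) = 1 := by
  rw [dist_eq_norm, spoke, add_sub_cancel_left, hu]

lemma dist_spoke_spoke_succ (hv : ‖v‖ = 1) (i : ℕ) (s : ι) :
    dist (spoke v u i s) (spoke v u (i + 1) s) = 3 := by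
  rw [spoke, spoke, dist_add_right, dist_hub_hub hv]
  push_cast
  norm_num

lemma hub_ne_spoke (hv : ‖v‖ = 1) (hu : ∀ s, ‖u s‖ = 1) (i j : ℕ) (s : ι) :
    hub v i ≠ spoke v u j s := by
  intro h
  obtain rfl : i = j := eq_of_dist_hub_lt hv (by rw [h, dist_spoke_hub hu]; norm_num)
  have := dist_spoke_hub (v := v) hu i s
  rw [← h, dist_self] at this
  norm_num at this

lemma spoke_inj (hv : ‖v‖ = 1) (hu : ∀ s, ‖u s‖ = 1) (hu_inj : Injective u) {i j : ℕ}
    {s t : ι} (h : spoke v u i s = spoke v u j t) : i = j ∧ s = t := by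
  obtain rfl : i = j := eq_of_dist_hub_lt hv <| calc
    dist (hub v i) (hub v j)
        ≤ dist (hub v i) (spoke v u i s) + dist (spoke v u j t) (hub v j) := by
      rw [← h]; exact dist_triangle _ _ _
    _ = 2 := by rw [dist_comm, dist_spoke_hub hu, dist_spoke_hub hu]; norm_num
    _ < 3 := by norm_num
  exact ⟨rfl, hu_inj (add_left_cancel h)⟩

lemma dist_hubChain (hv : ‖v‖ = 1) (hu : ∀ s, ‖u s‖ = 1) {M : ℕ} (σ : Fin (M + 2) → ι)
    (j : Fin (3 * M + 2)) :
    dist (hubChain v u σ j.castSucc) (hubChain v u σ j.succ) = hubChainDist (3 * M + 2) j := by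
  have hj := j.isLt
  rcases (by omega : (j : ℕ) % 3 = 0 ∨ (j : ℕ) % 3 = 1 ∨ (j : ℕ) % 3 = 2) with h | h | h
  · simp only [hubChain, hubChainDist, Fin.val_castSucc, Fin.val_succ]
    rw [if_neg (by omega), if_pos (by omega), if_neg (by omega),
      (by omega : ((j : ℕ) + 1) / 3 = j / 3)]
    exact dist_spoke_hub hu _ _
  · simp only [hubChain, hubChainDist, Fin.val_castSucc, Fin.val_succ]
    rw [if_pos h, if_neg (by omega), if_neg (by omega),
      (by omega : ((j : ℕ) + 1) / 3 = j / 3), dist_comm]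
    exact dist_spoke_hub hu _ _
  · have hslot : slot j.succ = slot j.castSucc := Fin.ext (by simp [slot]; omega)
    simp only [hubChain, hubChainDist, hslot, Fin.val_castSucc, Fin.val_succ]
    rw [if_neg (by omega), if_neg (by omega), if_pos h,
      (by omega : ((j : ℕ) + 1) / 3 = j / 3 + 1)]
    exact dist_spoke_spoke_succ hv _ _

lemma injective_hubChain (hv : ‖v‖ = 1) (hu : ∀ s, ‖u s‖ = 1) (hu_inj : Injective u)
    {M : ℕ} {σ : Fin (M + 2) → ι} (hσ : Injective σ) : Injective (hubChain v u σ) := by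
  intro j j' h
  simp only [hubChain] at h
  split_ifs at h with hj hj'
  · exact Fin.ext (by have := hub_injective hv h; omega)
  · exact absurd h (hub_ne_spoke hv hu _ _ _)
  · exact absurd h.symm (hub_ne_spoke hv hu _ _ _)
  · obtain ⟨hi, hs⟩ := spoke_inj hv hu hu_inj h
    have := congrArg Fin.val (hσ hs)
    simp only [slot] at this
    exact Fin.ext (by omega)

lemma hubChain_injective (hv : ‖v‖ = 1) (hu : ∀ s, ‖u s‖ = 1) (hu_inj : Injective u) {M : ℕ} :
    Injective (hubChain v u : (Fin (M + 2) → ι) → Fin (3 * M + 2 + 1) → E) := by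
  intro σ σ' h
  funext a
  obtain ⟨j, hj, rfl⟩ : ∃ j : Fin (3 * M + 2 + 1), (j : ℕ) % 3 ≠ 1 ∧ slot j = a :=
    ⟨⟨min (3 * a) (3 * M + 2), by omega⟩, by simp only; omega,
      Fin.ext (by simp only [slot]; omega)⟩
  have := congrFun h j
  simp only [hubChain, if_neg hj] at this
  exact (spoke_inj hv hu hu_inj this).2

end HubsAndSpokes

section ChainCount

variable {d k : ℕ}

def chains (d k : ℕ) (P : Finset (EuclideanSpace ℝ (Fin d))) (δ : Fin k → ℝ) :
    Set (Fin (k + 1) → EuclideanSpace ℝ (Fin d)) :=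
  {p | (∀ i, p i ∈ P) ∧ Injective p ∧ ∀ j : Fin k, dist (p j.castSucc) (p j.succ) = δ j}

lemma chainCount_eq_ncard (P : Finset (EuclideanSpace ℝ (Fin d))) (δ : Fin k → ℝ) :
    chainCount d k P δ = (chains d k P δ).ncard := rfl

lemma chains_finite (P : Finset (EuclideanSpace ℝ (Fin d))) (δ : Fin k → ℝ) :
    (chains d k P δ).Finite :=
  (Set.Finite.pi fun _ => P.finite_toSet).subset fun _ hp i _ => hp.1 i

lemma chainCount_mono {P Q : Finset (EuclideanSpace ℝ (Fin d))} (hPQ : P ⊆ Q) (δ : Fin k → ℝ) :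
    chainCount d k P δ ≤ chainCount d k Q δ :=
  Set.ncard_le_ncard (fun _ hp => ⟨fun i => hPQ (hp.1 i), hp.2⟩) (chains_finite Q δ)

lemma exists_card_eq_chainCount_ge (hd : 0 < d) {P : Finset (EuclideanSpace ℝ (Fin d))} {n : ℕ}
    (hP : P.card ≤ n) (δ : Fin k → ℝ) :
    ∃ Q : Finset (EuclideanSpace ℝ (Fin d)),
      Q.card = n ∧ chainCount d k P δ ≤ chainCount d k Q δ := by
  have : Nonempty (Fin d) := ⟨⟨0, hd⟩⟩
  obtain ⟨Q, hPQ, hQ⟩ := Infinite.exists_superset_card_eq P n hP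
  exact ⟨Q, hQ, chainCount_mono hPQ δ⟩

lemma card_le_chainCount {P : Finset (EuclideanSpace ℝ (Fin d))} {δ : Fin k → ℝ} {α : Type*}
    {f : α → Fin (k + 1) → EuclideanSpace ℝ (Fin d)} (hf : Injective f)
    (hchain : ∀ a, f a ∈ chains d k P δ) : Nat.card α ≤ chainCount d k P δ := by
  rw [← Nat.card_range_of_injective hf, Nat.card_coe_set_eq, chainCount_eq_ncard]
  exact Set.ncard_le_ncard (Set.range_subset_iff.mpr hchain) (chains_finite P δ)

lemma exists_card_embedding_le_chainCount {ι : Type*} [Fintype ι]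
    {v : EuclideanSpace ℝ (Fin d)} {u : ι → EuclideanSpace ℝ (Fin d)} (hv : ‖v‖ = 1)
    (hu : ∀ s, ‖u s‖ = 1) (hu_inj : Injective u) (M : ℕ) :
    ∃ P : Finset (EuclideanSpace ℝ (Fin d)), P.card ≤ (M + 1) * (Fintype.card ι + 1) ∧
      Nat.card (Fin (M + 2) ↪ ι) ≤
        chainCount d (3 * M + 2) P (hubChainDist (3 * M + 2)) := by
  classical
  let P := (Finset.univ : Finset (Fin (M + 1) ⊕ Fin (M + 1) × ι)).image
    (Sum.elim (fun i : Fin (M + 1) => hub v i) fun p : Fin (M + 1) × ι => spoke v u p.1 p.2)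
  refine ⟨P, ?_, card_le_chainCount (f := fun σ => hubChain v u σ)
    ((hubChain_injective hv hu hu_inj).comp DFunLike.coe_injective) fun σ => ⟨?_, ?_, ?_⟩⟩
  · calc P.card ≤ Fintype.card (Fin (M + 1) ⊕ Fin (M + 1) × ι) := Finset.card_image_le
      _ = (M + 1) * (Fintype.card ι + 1) := by
        simp only [Fintype.card_sum, Fintype.card_prod, Fintype.card_fin]
        ring
  · intro j
    have hj := j.isLt
    simp only [hubChain]
    split
    · exact Finset.mem_image.mpr ⟨.inl ⟨j / 3, by omega⟩, Finset.mem_univ _, rfl⟩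
    · exact Finset.mem_image.mpr ⟨.inr (⟨j / 3, by omega⟩, σ (slot j)), Finset.mem_univ _, rfl⟩
  · exact injective_hubChain hv hu hu_inj σ.injective
  · exact dist_hubChain hv hu σ

end ChainCount

/-- The Cayley transform maps `ℝ` injectively onto the unit circle. -/
noncomputable def cayleyUnitVec (x : ℝ) : EuclideanSpace ℝ (Fin 2) :=
  Complex.orthonormalBasisOneI.repr ((1 + x * Complex.I) / (1 - x * Complex.I))

lemma norm_cayleyUnitVec (x : ℝ) : ‖cayleyUnitVec x‖ = 1 := by
  have hconj : 1 - x * Complex.I = (starRingEnd ℂ) (1 + x * Complex.I) := by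
    simp [map_add, sub_eq_add_neg]
  have hne : 1 + x * Complex.I ≠ 0 := fun h => by simpa using congrArg Complex.re h
  rw [cayleyUnitVec, LinearIsometryEquiv.norm_map, norm_div, hconj, Complex.norm_conj,
    div_self (norm_ne_zero_iff.mpr hne)]

lemma cayleyUnitVec_injective : Injective cayleyUnitVec := by
  intro x y h
  have hne : ∀ z : ℝ, 1 - z * Complex.I ≠ 0 := fun z h => by simpa using congrArg Complex.re h
  have h := Complex.orthonormalBasisOneI.repr.injective h
  rw [div_eq_div_iff (hne x) (hne y)] at h
  have := congrArg Complex.im h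
  simp only [Complex.mul_im, Complex.add_re, Complex.add_im, Complex.sub_re, Complex.sub_im,
    Complex.one_re, Complex.one_im, Complex.mul_re, Complex.ofReal_re, Complex.ofReal_im,
    Complex.I_re, Complex.I_im] at this
  linarith

lemma pow_le_card_embedding_prod (m q : ℕ) : q ^ m ≤ Nat.card (Fin m ↪ Fin m × Fin q) := calc
  q ^ m = Nat.card (Fin m → Fin q) := by simp
  _ ≤ Nat.card (Fin m ↪ Fin m × Fin q) :=
    Nat.card_le_card_of_injective
      (fun τ => ⟨fun a => (a, τ a), fun _ _ h => congrArg Prod.fst h⟩)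
      fun _ _ h => funext fun a => congrArg Prod.snd (congrFun (congrArg DFunLike.coe h) a)

lemma half_div_le_nat_div {n D : ℕ} (hD : 0 < D) (hn : D ≤ n) :
    (n : ℝ) / (2 * D) ≤ (n / D : ℕ) := by
  have hq : 1 ≤ n / D := (Nat.one_le_div_iff hD).mpr hn
  have hlt : n < n / D * D + D := Nat.lt_div_mul_add hD
  have : (n : ℝ) ≤ 2 * D * (n / D : ℕ) := by
    exact_mod_cast (by nlinarith : n ≤ 2 * D * (n / D))
  rw [div_le_iff₀ (by positivity)]
  linarith

theorem chains_lower_R2_mod3_eq_2_general (k : ℕ) (hmod : k % 3 = 2) :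
    ∃ c : ℝ, 0 < c ∧ ∃ N : ℕ, ∀ n : ℕ, N ≤ n →
      ∃ (P : Finset (EuclideanSpace ℝ (Fin 2))) (δ : Fin k → ℝ),
        P.card = n ∧ (∀ j, 0 < δ j) ∧
        c * (n : ℝ) ^ ((k + 1) / 3 + 1) ≤ (chainCount 2 k P δ : ℝ) := by
  obtain ⟨M, rfl⟩ : ∃ M, k = 3 * M + 2 := ⟨k / 3, by omega⟩
  rw [(by omega : (3 * M + 2 + 1) / 3 + 1 = M + 2)]
  set D := (M + 1) * (M + 3)
  have hD : 0 < D := by positivity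
  refine ⟨(2 * D : ℝ)⁻¹ ^ (M + 2), by positivity, D, fun n hn => ?_⟩
  set q := n / D
  have hq : 1 ≤ q := (Nat.one_le_div_iff hD).mpr hn
  let u : Fin (M + 2) × Fin q → EuclideanSpace ℝ (Fin 2) :=
    fun p => cayleyUnitVec (finProdFinEquiv p : ℕ)
  have hu_inj : Injective u := cayleyUnitVec_injective.comp
    (Nat.cast_injective.comp (Fin.val_injective.comp finProdFinEquiv.injective))
  obtain ⟨P, hPcard, hPcount⟩ := exists_card_embedding_le_chainCount (norm_cayleyUnitVec 0)
    (fun _ => norm_cayleyUnitVec _) hu_inj M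
  have hPn : P.card ≤ n := calc
    P.card ≤ (M + 1) * ((M + 2) * q + 1) := by simpa using hPcard
    _ ≤ (M + 1) * ((M + 3) * q) := Nat.mul_le_mul_left _ (by linarith)
    _ = q * D := by ring
    _ ≤ n := Nat.div_mul_le_self n D
  obtain ⟨Q, hQcard, hQcount⟩ := exists_card_eq_chainCount_ge two_pos hPn
    (hubChainDist (3 * M + 2))
  refine ⟨Q, hubChainDist _, hQcard, hubChainDist_pos _, ?_⟩
  calc (2 * D : ℝ)⁻¹ ^ (M + 2) * (n : ℝ) ^ (M + 2) = ((n : ℝ) / (2 * D)) ^ (M + 2) := by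
        rw [← mul_pow, inv_mul_eq_div]
    _ ≤ (q : ℝ) ^ (M + 2) := pow_le_pow_left₀ (by positivity) (half_div_le_nat_div hD hn) _
    _ ≤ chainCount 2 (3 * M + 2) Q _ := by
      exact_mod_cast ((pow_le_card_embedding_prod (M + 2) q).trans hPcount).trans hQcount

theorem chains_lower_R2_mod3_eq_2 (k : ℕ) (hk : 2 ≤ k) (hmod : k % 3 = 2) :
    ∃ c : ℝ, 0 < c ∧ ∃ N : ℕ, ∀ n : ℕ, N ≤ n →
      ∃ (P : Finset (EuclideanSpace ℝ (Fin 2))) (δ : Fin k → ℝ),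
        P.card = n ∧ (∀ j, 0 < δ j) ∧
        c * (n : ℝ) ^ ((k + 1) / 3 + 1) ≤ (chainCount 2 k P δ : ℝ) :=
  chains_lower_R2_mod3_eq_2_general k hmod
end

section
/- For every integer k ≥ 5 with k ≡ 2 (mod 3), there exists a constant c (depending only on k) such that for every n, C_k(n) ≤ c · n² · u(n)^{(k−2)/3}. -/
/-- `maxUnitDist d n` is the maximum, over all `n`-point sets `P ⊆ ℝ^d` and all `δ > 0`, of
the number of ordered pairs of points of `P` at distance `δ`. -/
noncomputable def maxUnitDist (d n : ℕ) : ℕ :=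
  sSup {m | ∃ (P : Finset (EuclideanSpace ℝ (Fin d))) (δ : ℝ),
    P.card = n ∧ 0 < δ ∧
    m = Set.ncard {pq : EuclideanSpace ℝ (Fin d) × EuclideanSpace ℝ (Fin d) |
      pq.1 ∈ P ∧ pq.2 ∈ P ∧ dist pq.1 pq.2 = δ}}


/-!
Write `k = 3e + 2` and cut a chain `p₀, …, p_k` into the blocks `p_{3i}, p_{3i+1}, p_{3i+2}`,
`i ≤ e`. The outer points of the blocks are `p₀`, `p_k` and `e` pairs `(p_{3i+2}, p_{3i+3})` at the
prescribed distances `δ_{3i+2}`: at most `n² u(n)^e` choices. Once they are fixed, the middle point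
`p_{3i+1}` lies on two circles around the distinct points `p_{3i}` and `p_{3i+2}`, so it has at
most two positions. Hence `C_k(n) ≤ 2^{e+1} n² u(n)^e`.
-/

open Finset Function Module EuclideanGeometry

section TwoCircles

variable {V Pt : Type*} [NormedAddCommGroup V] [InnerProductSpace ℝ V] [MetricSpace Pt]
  [NormedAddTorsor V Pt]

theorem exists_eq_or_eq_of_dist_eq_of_dist_eq (hV : finrank ℝ V = 2) {c₁ c₂ : Pt}
    (hc : c₁ ≠ c₂) (r₁ r₂ : ℝ) :
    ∃ u v : Pt, ∀ x, dist x c₁ = r₁ → dist x c₂ = r₂ → x = u ∨ x = v := by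
  have : FiniteDimensional ℝ V := Module.finite_of_finrank_pos (by omega)
  by_cases h : ∃ u v, u ≠ v ∧ dist u c₁ = r₁ ∧ dist u c₂ = r₂ ∧ dist v c₁ = r₁ ∧ dist v c₂ = r₂
  · obtain ⟨u, v, huv, hu₁, hu₂, hv₁, hv₂⟩ := h
    exact ⟨u, v, fun x hx₁ hx₂ =>
      eq_of_dist_eq_of_dist_eq_of_finrank_eq_two hV hc huv hu₁ hv₁ hx₁ hu₂ hv₂ hx₂⟩
  · by_cases h' : ∃ u, dist u c₁ = r₁ ∧ dist u c₂ = r₂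
    · obtain ⟨u, hu₁, hu₂⟩ := h'
      exact ⟨u, u, fun x hx₁ hx₂ => Or.inl (by_contra fun hxu => h ⟨x, u, hxu, hx₁, hx₂, hu₁, hu₂⟩)⟩
    · exact ⟨c₁, c₁, fun x hx₁ hx₂ => (h' ⟨x, hx₁, hx₂⟩).elim⟩

end TwoCircles

section LinkedSeqs

variable {X : Type*} [DecidableEq X] {e : ℕ}

def linkedSeqs (S : Finset X) (D : Fin e → Finset (X × X)) : Finset (Fin (e + 1) → X × X) :=
  {a ∈ Fintype.piFinset fun _ => S ×ˢ S | ∀ i : Fin e, ((a i.castSucc).2, (a i.succ).1) ∈ D i}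

theorem mem_linkedSeqs {S : Finset X} {D : Fin e → Finset (X × X)} {a : Fin (e + 1) → X × X} :
    a ∈ linkedSeqs S D ↔
      (∀ i, a i ∈ S ×ˢ S) ∧ ∀ i : Fin e, ((a i.castSucc).2, (a i.succ).1) ∈ D i := by
  simp [linkedSeqs]

theorem card_linkedSeqs_le (S : Finset X) (D : Fin e → Finset (X × X)) :
    #(linkedSeqs S D) ≤ #S ^ 2 * ∏ i, #(D i) := by
  let f (a : Fin (e + 1) → X × X) : X × X × (Fin e → X × X) :=
    ((a 0).1, (a (Fin.last e)).2, fun i => ((a i.castSucc).2, (a i.succ).1))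
  calc #(linkedSeqs S D) ≤ #(S ×ˢ S ×ˢ Fintype.piFinset D) := by
        refine card_le_card_of_injOn f (fun a ha => ?_) (fun a _ b _ hab => ?_)
        · obtain ⟨hS, hD⟩ := mem_linkedSeqs.1 ha
          simp only [mem_coe, mem_product, Fintype.mem_piFinset, f]
          exact ⟨(mem_product.1 (hS 0)).1, (mem_product.1 (hS _)).2, hD⟩
        · simp only [f, Prod.mk.injEq, funext_iff] at hab
          obtain ⟨hfirst, hlast, hlink⟩ := hab
          funext i
          refine Prod.ext ?_ ?_
          · induction i using Fin.cases with
            | zero => exact hfirst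
            | succ j => exact (hlink j).2
          · induction i using Fin.lastCases with
            | last => exact hlast
            | cast j => exact (hlink j).1
    _ = #S ^ 2 * ∏ i, #(D i) := by
        rw [card_product, card_product, Fintype.card_piFinset, sq, mul_assoc]

end LinkedSeqs

section Chains

variable {X : Type*} [PseudoMetricSpace X]

noncomputable def distPairs (P : Finset X) (r : ℝ) : Finset (X × X) :=
  {pq ∈ P ×ˢ P | dist pq.1 pq.2 = r}

theorem ncard_eq_card_distPairs (P : Finset X) (r : ℝ) :
    {pq : X × X | pq.1 ∈ P ∧ pq.2 ∈ P ∧ dist pq.1 pq.2 = r}.ncard = #(distPairs P r) := by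
  rw [← Set.ncard_coe_finset]
  congr 1
  ext pq
  simp [distPairs, and_assoc]

theorem card_distPairs_le (P : Finset X) (r : ℝ) : #(distPairs P r) ≤ #P ^ 2 :=
  (card_filter_le _ _).trans_eq (by rw [card_product, sq])

variable [DecidableEq X] {k e : ℕ}

noncomputable def chainFinset (P : Finset X) (δ : Fin k → ℝ) : Finset (Fin (k + 1) → X) :=
  {p ∈ Fintype.piFinset fun _ => P |
    Injective p ∧ ∀ j, dist (p j.castSucc) (p j.succ) = δ j}

theorem mem_chainFinset {P : Finset X} {δ : Fin k → ℝ} {p : Fin (k + 1) → X} :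
    p ∈ chainFinset P δ ↔
      (∀ i, p i ∈ P) ∧ Injective p ∧ ∀ j, dist (p j.castSucc) (p j.succ) = δ j := by
  simp [chainFinset]

theorem dist_of_mem_chainFinset {P : Finset X} {δ : Fin k → ℝ} {p : Fin (k + 1) → X}
    (hp : p ∈ chainFinset P δ) {a b : Fin (k + 1)} (j : Fin k) (ha : (a : ℕ) = j)
    (hb : (b : ℕ) = j + 1) : dist (p a) (p b) = δ j := by
  obtain rfl : a = j.castSucc := Fin.ext ha
  obtain rfl : b = j.succ := Fin.ext hb
  exact (mem_chainFinset.1 hp).2.2 j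

end Chains

section Blocks

variable {X : Type*} {e : ℕ}

def blockEnds (p : Fin (3 * e + 2 + 1) → X) (i : Fin (e + 1)) : X × X :=
  (p ⟨3 * i, by omega⟩, p ⟨3 * i + 2, by omega⟩)

def blockMids (p : Fin (3 * e + 2 + 1) → X) (i : Fin (e + 1)) : X :=
  p ⟨3 * i + 1, by omega⟩

theorem eq_of_blockEnds_eq_of_blockMids_eq {p q : Fin (3 * e + 2 + 1) → X}
    (hends : blockEnds p = blockEnds q) (hmids : blockMids p = blockMids q) : p = q := by
  funext m
  have hends := congrFun hends ⟨m / 3, by omega⟩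
  have hmids := congrFun hmids ⟨m / 3, by omega⟩
  simp only [blockEnds, blockMids, Prod.mk.injEq] at hends hmids
  obtain h | h | h : (m : ℕ) % 3 = 0 ∨ (m : ℕ) % 3 = 1 ∨ (m : ℕ) % 3 = 2 := by omega
  · convert hends.1 using 2 <;> ext <;> simp only <;> omega
  · convert hmids using 2 <;> ext <;> simp only <;> omega
  · convert hends.2 using 2 <;> ext <;> simp only <;> omega

variable [PseudoMetricSpace X] [DecidableEq X]

theorem blockEnds_fst_ne_snd {P : Finset X} {δ : Fin (3 * e + 2) → ℝ}
    {p : Fin (3 * e + 2 + 1) → X} (hp : p ∈ chainFinset P δ) (i : Fin (e + 1)) :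
    (blockEnds p i).1 ≠ (blockEnds p i).2 := fun h => by
  have := Fin.val_eq_of_eq ((mem_chainFinset.1 hp).2.1 h)
  simp at this

theorem dist_blockMids_blockEnds_fst {P : Finset X} {δ : Fin (3 * e + 2) → ℝ}
    {p : Fin (3 * e + 2 + 1) → X} (hp : p ∈ chainFinset P δ) (i : Fin (e + 1)) :
    dist (blockMids p i) (blockEnds p i).1 = δ ⟨3 * i, by omega⟩ :=
  (dist_comm _ _).trans (dist_of_mem_chainFinset hp _ rfl rfl)

theorem dist_blockMids_blockEnds_snd {P : Finset X} {δ : Fin (3 * e + 2) → ℝ}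
    {p : Fin (3 * e + 2 + 1) → X} (hp : p ∈ chainFinset P δ) (i : Fin (e + 1)) :
    dist (blockMids p i) (blockEnds p i).2 = δ ⟨3 * i + 1, by omega⟩ :=
  dist_of_mem_chainFinset hp _ rfl rfl

theorem blockEnds_mem_linkedSeqs {P : Finset X} {δ : Fin (3 * e + 2) → ℝ}
    {p : Fin (3 * e + 2 + 1) → X} (hp : p ∈ chainFinset P δ) :
    blockEnds p ∈ linkedSeqs P fun i : Fin e => distPairs P (δ ⟨3 * i + 2, by omega⟩) := by
  have hP := (mem_chainFinset.1 hp).1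
  refine mem_linkedSeqs.2 ⟨fun i => mem_product.2 ⟨hP _, hP _⟩, fun i => ?_⟩
  refine mem_filter.2 ⟨mem_product.2 ⟨hP _, hP _⟩, ?_⟩
  exact dist_of_mem_chainFinset hp _ rfl (by simp [Fin.val_succ]; ring)

end Blocks

section Planar

variable {V Pt : Type*} [NormedAddCommGroup V] [InnerProductSpace ℝ V] [MetricSpace Pt]
  [NormedAddTorsor V Pt] [DecidableEq Pt] {e : ℕ}

theorem card_filter_blockEnds_eq_le (hV : finrank ℝ V = 2) (P : Finset Pt)
    (δ : Fin (3 * e + 2) → ℝ) (b : Fin (e + 1) → Pt × Pt) :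
    #{p ∈ chainFinset P δ | blockEnds p = b} ≤ 2 ^ (e + 1) := by
  by_cases hb : ∀ i, (b i).1 ≠ (b i).2
  · choose u v huv using fun i : Fin (e + 1) => exists_eq_or_eq_of_dist_eq_of_dist_eq hV (hb i)
      (δ ⟨3 * i, by omega⟩) (δ ⟨3 * i + 1, by omega⟩)
    calc #{p ∈ chainFinset P δ | blockEnds p = b}
        ≤ #(Fintype.piFinset fun i => ({u i, v i} : Finset Pt)) := by
          refine card_le_card_of_injOn blockMids (fun p hp => ?_) (fun p hp q hq hpq => ?_)
          · obtain ⟨hchain, rfl⟩ := mem_filter.1 hp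
            refine Fintype.mem_piFinset.2 fun i => ?_
            simpa using huv i _ (dist_blockMids_blockEnds_fst hchain i)
              (dist_blockMids_blockEnds_snd hchain i)
          · exact eq_of_blockEnds_eq_of_blockMids_eq
              ((mem_filter.1 hp).2.trans (mem_filter.1 hq).2.symm) hpq
      _ ≤ 2 ^ (e + 1) := by
          rw [Fintype.card_piFinset]
          simpa using prod_le_pow_card (univ : Finset (Fin (e + 1))) _ 2 fun i _ => card_le_two
  · obtain ⟨i, hi⟩ : ∃ i, (b i).1 = (b i).2 := by simpa using hb
    rw [card_eq_zero.2 (filter_eq_empty_iff.2 fun p hp hpb =>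
      blockEnds_fst_ne_snd hp i (hpb ▸ hi))]
    exact Nat.zero_le _

theorem card_chainFinset_le (hV : finrank ℝ V = 2) (P : Finset Pt) (δ : Fin (3 * e + 2) → ℝ) :
    #(chainFinset P δ) ≤
      2 ^ (e + 1) * (#P ^ 2 * ∏ i : Fin e, #(distPairs P (δ ⟨3 * i + 2, by omega⟩))) :=
  calc #(chainFinset P δ)
      ≤ 2 ^ (e + 1) * #(linkedSeqs P fun i : Fin e => distPairs P (δ ⟨3 * i + 2, by omega⟩)) :=
        card_le_mul_card_image_of_maps_to (fun _ hp => blockEnds_mem_linkedSeqs hp) _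
          fun b _ => card_filter_blockEnds_eq_le hV P δ b
    _ ≤ _ := Nat.mul_le_mul_left _ (card_linkedSeqs_le _ _)

end Planar

theorem chainCount_eq_card_chainFinset {d k : ℕ} [DecidableEq (EuclideanSpace ℝ (Fin d))]
    (P : Finset (EuclideanSpace ℝ (Fin d))) (δ : Fin k → ℝ) :
    chainCount d k P δ = #(chainFinset P δ) := by
  rw [chainCount, ← Set.ncard_coe_finset]
  congr 1
  ext p
  simp [mem_chainFinset]

theorem card_distPairs_le_maxUnitDist {d : ℕ} (P : Finset (EuclideanSpace ℝ (Fin d))) {r : ℝ}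
    (hr : 0 < r) : #(distPairs P r) ≤ maxUnitDist d #P := by
  refine le_csSup ⟨#P ^ 2, ?_⟩ ⟨P, r, rfl, hr, (ncard_eq_card_distPairs P r).symm⟩
  rintro _ ⟨Q, s, hQ, -, rfl⟩
  rw [ncard_eq_card_distPairs, ← hQ]
  exact card_distPairs_le Q s

theorem maxChains_le (e n : ℕ) :
    maxChains 2 (3 * e + 2) n ≤ 2 ^ (e + 1) * (n ^ 2 * maxUnitDist 2 n ^ e) := by
  classical
  refine csSup_le' ?_
  rintro _ ⟨P, δ, rfl, hδ, rfl⟩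
  rw [chainCount_eq_card_chainFinset]
  refine (card_chainFinset_le finrank_euclideanSpace_fin P δ).trans ?_
  gcongr
  simpa using prod_le_pow_card (univ : Finset (Fin e)) _ _ fun i _ =>
    card_distPairs_le_maxUnitDist P (hδ _)

theorem chains_vs_unit_distances_mod3_eq_2_general (k : ℕ) (hmod : k % 3 = 2) :
    ∃ c : ℝ, 0 < c ∧ ∀ n : ℕ,
      (maxChains 2 k n : ℝ) ≤ c * (n : ℝ) ^ 2 * (maxUnitDist 2 n : ℝ) ^ ((k - 2) / 3) := by
  obtain ⟨e, rfl⟩ : ∃ e, k = 3 * e + 2 := ⟨k / 3, by omega⟩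
  refine ⟨2 ^ (e + 1), by positivity, fun n => ?_⟩
  rw [show (3 * e + 2 - 2) / 3 = e by omega, mul_assoc]
  exact_mod_cast maxChains_le e n

theorem chains_vs_unit_distances_mod3_eq_2 (k : ℕ) (hk : 5 ≤ k) (hmod : k % 3 = 2) :
    ∃ c : ℝ, 0 < c ∧ ∀ n : ℕ,
      (maxChains 2 k n : ℝ) ≤ c * (n : ℝ) ^ 2 * (maxUnitDist 2 n : ℝ) ^ ((k - 2) / 3) :=
  chains_vs_unit_distances_mod3_eq_2_general k hmod
end
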